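/- arXiv:2109.00454 — 3 statements merged into one kernel-verified Lean document; each statement's English description precedes it below -/
import Mathlib

section
/- For any index i, the variance of the signal felt by the archetype configuration equals Var[h_i ξ_i] = ((N−1)·M/N²)·(1 + (N−2)·(2p−1)² − (N−1)·(2p−1)⁴). -/
/-!
Because `ξ_i ^ 2 = ξ_j ^ 2 = 1`, the field is `(1/N) ∑_a Y_a` with
`Y_a = χ_{i,a} S_a` and `S_a = ∑_{j ≠ i} χ_{j,a}`. Distinct `Y_a` are functions of disjoint
columns of `χ`, hence independent, so the variance is `M/N²` times `Var Y_a`. Since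
`χ_{i,a} ^ 2 = 1`, `E[Y_a²] = E[S_a²] = (N-1)(1-r²) + (N-1)²r²`, while independence of
`χ_{i,a}` and `S_a` gives `E[Y_a] = r · (N-1)r`.
-/

open MeasureTheory ProbabilityTheory Finset

section SignVariable

variable {Ω : Type*} [MeasurableSpace Ω] {μ : Measure Ω} {f : Ω → ℝ}

lemma ae_eq_one_or_eq_neg_one_of_measure_eq [IsProbabilityMeasure μ] {p : ℝ} (hp0 : 0 ≤ p)
    (hp1 : p ≤ 1) (hf : Measurable f) (h1 : μ {ω | f ω = 1} = ENNReal.ofReal p)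
    (hm1 : μ {ω | f ω = -1} = ENNReal.ofReal (1 - p)) :
    ∀ᵐ ω ∂μ, f ω = 1 ∨ f ω = -1 := by
  have hA : MeasurableSet {ω | f ω = 1} := hf (measurableSet_singleton 1)
  have hB : MeasurableSet {ω | f ω = -1} := hf (measurableSet_singleton (-1))
  have hdisj : Disjoint {ω | f ω = 1} {ω | f ω = -1} :=
    Set.disjoint_left.2 fun ω (h1 : f ω = 1) (h2 : f ω = -1) => by linarith
  rw [ae_iff, show {ω | ¬(f ω = 1 ∨ f ω = -1)} = ({ω | f ω = 1} ∪ {ω | f ω = -1})ᶜ by ext; simp,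
    prob_compl_eq_zero_iff (hA.union hB), measure_union hdisj hB, h1, hm1,
    ← ENNReal.ofReal_add hp0 (by linarith)]
  norm_num

lemma integral_eq_two_mul_sub_one_of_measure_eq [IsProbabilityMeasure μ] {p : ℝ} (hp0 : 0 ≤ p)
    (hf : Measurable f) (hsign : ∀ᵐ ω ∂μ, f ω = 1 ∨ f ω = -1)
    (h1 : μ {ω | f ω = 1} = ENNReal.ofReal p) :
    ∫ ω, f ω ∂μ = 2 * p - 1 := by
  have hA : MeasurableSet {ω | f ω = 1} := hf (measurableSet_singleton 1)
  have hf_eq : f =ᵐ[μ] fun ω => 2 * {ω | f ω = 1}.indicator 1 ω - 1 := by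
    filter_upwards [hsign] with ω hω
    rcases hω with h | h <;> norm_num [Set.indicator_apply, h]
  rw [integral_congr_ae hf_eq, integral_sub ((integrable_const _).indicator hA |>.const_mul 2)
    (integrable_const _), integral_const_mul, integral_indicator_one hA, measureReal_def, h1,
    ENNReal.toReal_ofReal hp0]
  simp

lemma ae_sq_eq_one_of_ae_sign (hsign : ∀ᵐ ω ∂μ, f ω = 1 ∨ f ω = -1) : ∀ᵐ ω ∂μ, f ω ^ 2 = 1 := by
  filter_upwards [hsign] with ω h
  rcases h with h | h <;> simp [h]

lemma memLp_top_of_ae_sign (hf : Measurable f) (hsign : ∀ᵐ ω ∂μ, f ω = 1 ∨ f ω = -1) :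
    MemLp f ⊤ μ :=
  memLp_top_of_bound hf.aestronglyMeasurable 1 <| by
    filter_upwards [hsign] with ω h
    rcases h with h | h <;> simp [h]

lemma variance_eq_one_sub_sq_of_ae_sign [IsProbabilityMeasure μ] {r : ℝ} (hf : Measurable f)
    (hsign : ∀ᵐ ω ∂μ, f ω = 1 ∨ f ω = -1) (hmean : ∫ ω, f ω ∂μ = r) :
    Var[f; μ] = 1 - r ^ 2 := by
  rw [variance_eq_sub ((memLp_top_of_ae_sign hf hsign).mono_exponent le_top)]
  simp only [Pi.pow_apply]
  rw [integral_congr_ae (ae_sq_eq_one_of_ae_sign hsign), hmean]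
  simp

end SignVariable

section IndependentSigns

variable {Ω ι : Type*} [MeasurableSpace Ω] {μ : Measure Ω} [IsProbabilityMeasure μ]
  {X : ι → Ω → ℝ} {r : ℝ}

lemma memLp_two_sum_of_ae_sign (hX : ∀ j, Measurable (X j))
    (hsign : ∀ j, ∀ᵐ ω ∂μ, X j ω = 1 ∨ X j ω = -1) (s : Finset ι) :
    MemLp (∑ j ∈ s, X j) 2 μ :=
  memLp_finsetSum' s fun j _ => (memLp_top_of_ae_sign (hX j) (hsign j)).mono_exponent le_top

lemma memLp_two_mul_sum_of_ae_sign (hX : ∀ j, Measurable (X j))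
    (hsign : ∀ j, ∀ᵐ ω ∂μ, X j ω = 1 ∨ X j ω = -1) (i : ι) (s : Finset ι) :
    MemLp (fun ω => X i ω * ∑ j ∈ s, X j ω) 2 μ := by
  simpa only [Finset.sum_apply] using
    (memLp_two_sum_of_ae_sign hX hsign s).mul' (memLp_top_of_ae_sign (hX i) (hsign i))

lemma integral_sum_of_ae_sign (hX : ∀ j, Measurable (X j))
    (hsign : ∀ j, ∀ᵐ ω ∂μ, X j ω = 1 ∨ X j ω = -1) (hmean : ∀ j, ∫ ω, X j ω ∂μ = r)
    (s : Finset ι) :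
    ∫ ω, ∑ j ∈ s, X j ω ∂μ = #s * r := by
  rw [integral_finsetSum s fun j _ => (memLp_top_of_ae_sign (hX j) (hsign j)).integrable le_top]
  simp [hmean]

lemma variance_sum_of_ae_sign (hX : ∀ j, Measurable (X j))
    (hsign : ∀ j, ∀ᵐ ω ∂μ, X j ω = 1 ∨ X j ω = -1) (hmean : ∀ j, ∫ ω, X j ω ∂μ = r)
    (hind : iIndepFun X μ) (s : Finset ι) :
    Var[∑ j ∈ s, X j; μ] = #s * (1 - r ^ 2) := by
  rw [IndepFun.variance_sum
    (fun j _ => (memLp_top_of_ae_sign (hX j) (hsign j)).mono_exponent le_top)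
    (fun j _ k _ hjk => hind.indepFun hjk)]
  simp [variance_eq_one_sub_sq_of_ae_sign (hX _) (hsign _) (hmean _), mul_sub]

lemma variance_mul_sum_of_ae_sign (hX : ∀ j, Measurable (X j))
    (hsign : ∀ j, ∀ᵐ ω ∂μ, X j ω = 1 ∨ X j ω = -1) (hmean : ∀ j, ∫ ω, X j ω ∂μ = r)
    (hind : iIndepFun X μ) {i : ι} {s : Finset ι} (hi : i ∉ s) :
    Var[fun ω => X i ω * ∑ j ∈ s, X j ω; μ] = #s * (1 + (#s - 1) * r ^ 2 - #s * r ^ 4) := by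
  have hS := memLp_two_sum_of_ae_sign hX hsign s
  have hSmean := integral_sum_of_ae_sign hX hsign hmean s
  have hS_sq : ∫ ω, (∑ j ∈ s, X j ω) ^ 2 ∂μ = #s * (1 - r ^ 2) + (#s * r) ^ 2 := by
    have := variance_eq_sub hS
    simp only [Pi.pow_apply, Finset.sum_apply] at this
    rw [← variance_sum_of_ae_sign hX hsign hmean hind s, this, hSmean]
    ring
  have hY_sq : ∫ ω, (X i ω * ∑ j ∈ s, X j ω) ^ 2 ∂μ = ∫ ω, (∑ j ∈ s, X j ω) ^ 2 ∂μ := by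
    refine integral_congr_ae ?_
    filter_upwards [ae_sq_eq_one_of_ae_sign (hsign i)] with ω h
    rw [mul_pow, h, one_mul]
  have hY_mean : ∫ ω, X i ω * ∑ j ∈ s, X j ω ∂μ = r * (#s * r) := by
    have h := (hind.indepFun_finsetSum_of_notMem hX hi).symm.integral_fun_mul_eq_mul_integral
      (hX i).aestronglyMeasurable hS.aestronglyMeasurable
    simp only [Finset.sum_apply] at h
    rw [h, hmean, hSmean]
  rw [variance_eq_sub (memLp_two_mul_sum_of_ae_sign hX hsign i s)]
  simp only [Pi.pow_apply]
  rw [hY_sq, hS_sq, hY_mean]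
  ring

end IndependentSigns

lemma ProbabilityTheory.iIndepFun.indepFun_comp_columns {Ω ι κ β γ : Type*} [MeasurableSpace Ω]
    {μ : Measure Ω} [Fintype ι] [MeasurableSpace β] [MeasurableSpace γ]
    {f : ι × κ → Ω → β} (hind : iIndepFun f μ) (hf : ∀ k, Measurable (f k))
    {φ ψ : (ι → β) → γ} (hφ : Measurable φ) (hψ : Measurable ψ) {a b : κ} (hab : a ≠ b) :
    IndepFun (fun ω => φ fun j => f (j, a) ω) (fun ω => ψ fun j => f (j, b) ω) μ := by
  classical
  have hdisj : Disjoint ((univ : Finset ι) ×ˢ {a}) (univ ×ˢ {b}) :=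
    disjoint_product.2 (Or.inr (disjoint_singleton.2 hab))
  exact (hind.indepFun_finset _ _ hdisj hf).comp
    (φ := fun x => φ fun j => x ⟨(j, a), by simp⟩) (ψ := fun x => ψ fun j => x ⟨(j, b), by simp⟩)
    (hφ.comp (measurable_pi_lambda _ fun j => measurable_pi_apply _))
    (hψ.comp (measurable_pi_lambda _ fun j => measurable_pi_apply _))

lemma sum_hebbian_mul_sign_eq {ι κ : Type*} [Fintype κ] (ξ : ι → ℝ) (hξ : ∀ j, ξ j ^ 2 = 1)
    (x : ι → κ → ℝ) (c : ℝ) (i : ι) (s : Finset ι) :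
    ∑ j ∈ s, (c * ∑ a, (ξ i * x i a) * (ξ j * x j a)) * (ξ i * ξ j)
      = c * ∑ a, x i a * ∑ j ∈ s, x j a := by
  simp only [mul_sum, sum_mul]
  rw [sum_comm]
  refine sum_congr rfl fun a _ => sum_congr rfl fun j _ => ?_
  linear_combination (c * x i a * x j a * ξ j ^ 2) * hξ i + (c * x i a * x j a) * hξ j

theorem archetype_field_variance_general
    {Ω : Type*} [MeasurableSpace Ω] (P : Measure Ω) [IsProbabilityMeasure P]
    (N M : ℕ)
    (p : ℝ) (hp : p ∈ Set.Icc (1 / 2 : ℝ) 1)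
    (ξ : Fin N → ℝ) (hξ : ∀ i, ξ i = 1 ∨ ξ i = -1)
    (χ : Fin N × Fin M → Ω → ℝ)
    (hχmeas : ∀ k, Measurable (χ k))
    (hχ1 : ∀ k, P {ω | χ k ω = 1} = ENNReal.ofReal p)
    (hχm1 : ∀ k, P {ω | χ k ω = -1} = ENNReal.ofReal (1 - p))
    (hindep : iIndepFun χ P)
    (J : Fin N → Fin N → Ω → ℝ)
    (hJ : ∀ i j ω, J i j ω =
      (1 / N) * ∑ a : Fin M, (ξ i * χ (i, a) ω) * (ξ j * χ (j, a) ω))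
    (i : Fin N) :
    variance (fun ω => ∑ j ∈ Finset.univ.erase i, J i j ω * (ξ i * ξ j)) P
      = ((N - 1) * M / N ^ 2) *
        (1 + (N - 2) * (2 * p - 1) ^ 2 - (N - 1) * (2 * p - 1) ^ 4) := by
  obtain ⟨hp12, hp1⟩ := hp
  have hp0 : 0 ≤ p := by linarith
  have hsign k := ae_eq_one_or_eq_neg_one_of_measure_eq hp0 hp1 (hχmeas k) (hχ1 k) (hχm1 k)
  have hmean k := integral_eq_two_mul_sub_one_of_measure_eq hp0 (hχmeas k) (hsign k) (hχ1 k)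
  set Y : Fin M → Ω → ℝ := fun a ω => χ (i, a) ω * ∑ j ∈ univ.erase i, χ (j, a) ω
  have hfield : (fun ω => ∑ j ∈ univ.erase i, J i j ω * (ξ i * ξ j))
      = fun ω => (1 / N) * (∑ a, Y a) ω := by
    ext ω
    simp only [hJ, Finset.sum_apply, Y]
    exact sum_hebbian_mul_sign_eq ξ (fun j => by rcases hξ j with h | h <;> simp [h])
      (fun j a => χ (j, a) ω) _ i _
  have hcard : (#(univ.erase i) : ℝ) = N - 1 := by
    rw [card_erase_of_mem (mem_univ i), card_univ, Fintype.card_fin, Nat.cast_pred i.pos]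
  have hcolumn (a : Fin M) :
      Var[Y a; P] = (N - 1) * (1 + (N - 2) * (2 * p - 1) ^ 2 - (N - 1) * (2 * p - 1) ^ 4) := by
    rw [variance_mul_sum_of_ae_sign (X := fun j => χ (j, a)) (fun j => hχmeas _)
      (fun j => hsign _) (fun j => hmean _) (hindep.precomp (Prod.mk_left_injective a))
      (notMem_erase i univ), hcard]
    ring
  have hφ : Measurable fun x : Fin N → ℝ => x i * ∑ j ∈ univ.erase i, x j := by fun_prop
  have hindep_columns : Set.Pairwise (univ : Finset (Fin M)) fun a b => IndepFun (Y a) (Y b) P :=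
    fun a _ b _ hab => hindep.indepFun_comp_columns hχmeas hφ hφ hab
  rw [hfield, variance_const_mul, IndepFun.variance_sum
    (fun a _ => memLp_two_mul_sum_of_ae_sign (X := fun j => χ (j, a)) (fun j => hχmeas _)
      (fun j => hsign _) i _) hindep_columns,
    sum_congr rfl fun a _ => hcolumn a, sum_const, card_univ, Fintype.card_fin,
    nsmul_eq_mul]
  ring

/-- For any index `i`, the variance of the signal felt by the archetype
configuration equals
`Var[h_i ξ_i] = ((N-1)*M/N^2) * (1 + (N-2)*(2p-1)^2 - (N-1)*(2p-1)^4)`. -/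
theorem archetype_field_variance
    {Ω : Type*} [MeasurableSpace Ω] (P : Measure Ω) [IsProbabilityMeasure P]
    (N M : ℕ) (hN : 2 ≤ N) (hM : 1 ≤ M)
    (p : ℝ) (hp : p ∈ Set.Icc (1 / 2 : ℝ) 1)
    (ξ : Fin N → ℝ) (hξ : ∀ i, ξ i = 1 ∨ ξ i = -1)
    (χ : Fin N × Fin M → Ω → ℝ)
    (hχmeas : ∀ k, Measurable (χ k))
    (hχ1 : ∀ k, P {ω | χ k ω = 1} = ENNReal.ofReal p)
    (hχm1 : ∀ k, P {ω | χ k ω = -1} = ENNReal.ofReal (1 - p))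
    (hindep : iIndepFun χ P)
    (J : Fin N → Fin N → Ω → ℝ)
    (hJ : ∀ i j ω, J i j ω =
      (1 / N) * ∑ a : Fin M, (ξ i * χ (i, a) ω) * (ξ j * χ (j, a) ω))
    (i : Fin N) :
    variance (fun ω => ∑ j ∈ Finset.univ.erase i, J i j ω * (ξ i * ξ j)) P
      = ((N - 1) * M / N ^ 2) *
        (1 + (N - 2) * (2 * p - 1) ^ 2 - (N - 1) * (2 * p - 1) ^ 4) :=
  archetype_field_variance_general P N M p hp ξ hξ χ hχmeas hχ1 hχm1 hindep J hJ i
end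

section
/- For any example label c ∈ {1,…,M}, the expected energy of the example configuration η^c under the Hebbian Hamiltonian equals E[H(η^c)] = −(N−1)·(1 + (M−1)·(2p−1)⁴). -/
/-!
Since `ξ_i ^ 2 = 1`, the energy of `η^c` only sees the `χ`'s: the ordered pair `i ≠ j` contributes
`∑_a χ_i^a χ_j^a χ_i^c χ_j^c`. The term `a = c` is identically `1`, and for `a ≠ c` the four factors
are independent signs of mean `2p - 1`, so each such term has expectation `(2p - 1)^4`.
-/

open MeasureTheory ProbabilityTheory

section Bounded

variable {Ω : Type*} [MeasurableSpace Ω] {P : Measure Ω} {X : Ω → ℝ}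

lemma memLp_top_of_ae_eq_one_or_eq_neg_one (hX : Measurable X)
    (hsign : ∀ᵐ ω ∂P, X ω = 1 ∨ X ω = -1) : MemLp X ⊤ P :=
  memLp_top_of_bound hX.aestronglyMeasurable 1 <| by
    filter_upwards [hsign] with ω h
    rcases h with h | h <;> norm_num [h]

lemma integrable_mul_mul_mul_of_memLp_top {W X Y Z : Ω → ℝ} [IsFiniteMeasure P]
    (hW : MemLp W ⊤ P) (hX : MemLp X ⊤ P) (hY : MemLp Y ⊤ P) (hZ : MemLp Z ⊤ P) :
    Integrable (fun ω => W ω * X ω * (Y ω * Z ω)) P :=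
  ((hZ.mul hY (r := ⊤)).mul (hX.mul hW (r := ⊤)) (r := ⊤)).integrable le_top

end Bounded

section SignVariable

variable {Ω : Type*} [MeasurableSpace Ω] {P : Measure Ω} [IsProbabilityMeasure P]
  {X Y : Ω → ℝ}

lemma ae_eq_one_or_eq_neg_one_of_measure_eq_s6 {p : ℝ} (hX : Measurable X) (hp : p ∈ Set.Icc 0 1)
    (h1 : P {ω | X ω = 1} = ENNReal.ofReal p)
    (hm1 : P {ω | X ω = -1} = ENNReal.ofReal (1 - p)) :
    ∀ᵐ ω ∂P, X ω = 1 ∨ X ω = -1 := by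
  have hA : MeasurableSet {ω | X ω = 1} := hX (measurableSet_singleton 1)
  have hB : MeasurableSet {ω | X ω = -1} := hX (measurableSet_singleton (-1))
  have hdisj : Disjoint {ω | X ω = 1} {ω | X ω = -1} :=
    Set.disjoint_left.mpr fun ω (h : X ω = 1) (h' : X ω = -1) => by norm_num [h] at h'
  change ∀ᵐ ω ∂P, ω ∈ {ω | X ω = 1} ∪ {ω | X ω = -1}
  rw [ae_mem_iff_measure_eq (hA.union hB).nullMeasurableSet, measure_union hdisj hB, h1, hm1,
    ← ENNReal.ofReal_add hp.1 (sub_nonneg.2 hp.2), measure_univ]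
  norm_num

lemma integral_eq_two_mul_sub_one {p : ℝ} (hX : Measurable X) (hp : 0 ≤ p)
    (hsign : ∀ᵐ ω ∂P, X ω = 1 ∨ X ω = -1) (h1 : P {ω | X ω = 1} = ENNReal.ofReal p) :
    ∫ ω, X ω ∂P = 2 * p - 1 := by
  have hA : MeasurableSet {ω | X ω = 1} := hX (measurableSet_singleton 1)
  have hX_eq : (fun ω => X ω) =ᵐ[P] fun ω => 2 * {ω | X ω = 1}.indicator 1 ω - 1 := by
    filter_upwards [hsign] with ω h
    rcases h with h | h <;> norm_num [Set.indicator_apply, h]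
  have hI : Integrable (fun ω => 2 * {ω | X ω = 1}.indicator (1 : Ω → ℝ) ω) P :=
    ((integrable_const (1 : ℝ)).indicator hA).const_mul 2
  rw [integral_congr_ae hX_eq, integral_sub hI (integrable_const 1), integral_const_mul,
    integral_indicator_one hA, measureReal_def, h1, ENNReal.toReal_ofReal hp]
  simp

lemma integral_mul_mul_mul_self_of_ae_eq_one_or_eq_neg_one
    (hX : ∀ᵐ ω ∂P, X ω = 1 ∨ X ω = -1) (hY : ∀ᵐ ω ∂P, Y ω = 1 ∨ Y ω = -1) :
    ∫ ω, X ω * Y ω * (X ω * Y ω) ∂P = 1 := by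
  have h : (fun ω => X ω * Y ω * (X ω * Y ω)) =ᵐ[P] fun _ => 1 := by
    filter_upwards [hX, hY] with ω hXω hYω
    rw [mul_mul_mul_comm, mul_self_eq_one_iff.2 hXω, mul_self_eq_one_iff.2 hYω, one_mul]
  rw [integral_congr_ae h, integral_const, probReal_univ, one_smul]

end SignVariable

section IndependentFamily

variable {Ω ι : Type*} [MeasurableSpace Ω] {P : Measure Ω} {χ : ι → Ω → ℝ} {r : ℝ}

lemma ProbabilityTheory.iIndepFun.integral_mul_of_ne (hindep : iIndepFun χ P)
    (hmeas : ∀ k, Measurable (χ k))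
    (hmean : ∀ k, ∫ ω, χ k ω ∂P = r) {k l : ι} (hkl : k ≠ l) :
    ∫ ω, χ k ω * χ l ω ∂P = r ^ 2 := by
  rw [(hindep.indepFun hkl).integral_fun_mul_eq_mul_integral (hmeas k).aestronglyMeasurable
    (hmeas l).aestronglyMeasurable, hmean, hmean, sq]

lemma ProbabilityTheory.iIndepFun.integral_mul_mul_mul_of_pairwise_ne (hindep : iIndepFun χ P)
    (hmeas : ∀ k, Measurable (χ k)) (hmean : ∀ k, ∫ ω, χ k ω ∂P = r) {k l m n : ι}
    (hkl : k ≠ l) (hkm : k ≠ m) (hkn : k ≠ n) (hlm : l ≠ m) (hln : l ≠ n) (hmn : m ≠ n) :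
    ∫ ω, χ k ω * χ l ω * (χ m ω * χ n ω) ∂P = r ^ 4 := by
  have h := (hindep.indepFun_mul_mul hmeas k l m n hkm hkn hlm hln).integral_fun_mul_eq_mul_integral
    ((hmeas k).mul (hmeas l)).aestronglyMeasurable ((hmeas m).mul (hmeas n)).aestronglyMeasurable
  simp only [Pi.mul_apply] at h
  rw [h, hindep.integral_mul_of_ne hmeas hmean hkl, hindep.integral_mul_of_ne hmeas hmean hmn]
  ring

end IndependentFamily

section Hebbian

variable {Ω ι κ : Type*} [MeasurableSpace Ω] {P : Measure Ω} [IsProbabilityMeasure P]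
  [Fintype κ] [DecidableEq κ] {χ : ι × κ → Ω → ℝ} {r : ℝ}

lemma integral_sum_mul_mul_mul_of_ne (hindep : iIndepFun χ P) (hmeas : ∀ k, Measurable (χ k))
    (hsign : ∀ k, ∀ᵐ ω ∂P, χ k ω = 1 ∨ χ k ω = -1) (hmean : ∀ k, ∫ ω, χ k ω ∂P = r)
    {i j : ι} (hij : i ≠ j) (c : κ) :
    ∫ ω, ∑ a, χ (i, a) ω * χ (j, a) ω * (χ (i, c) ω * χ (j, c) ω) ∂P
      = 1 + (Fintype.card κ - 1) * r ^ 4 := by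
  have hL k := memLp_top_of_ae_eq_one_or_eq_neg_one (hmeas k) (hsign k)
  have hterm a : ∫ ω, χ (i, a) ω * χ (j, a) ω * (χ (i, c) ω * χ (j, c) ω) ∂P
      = (if a = c then 1 - r ^ 4 else 0) + r ^ 4 := by
    split_ifs with hac
    · rw [hac, integral_mul_mul_mul_self_of_ae_eq_one_or_eq_neg_one (hsign _) (hsign _)]
      ring
    · rw [hindep.integral_mul_mul_mul_of_pairwise_ne hmeas hmean] <;> simp [hij, hac]
  rw [integral_finsetSum _ fun a _ =>
    integrable_mul_mul_mul_of_memLp_top (hL _) (hL _) (hL _) (hL _)]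
  simp only [hterm, Finset.sum_add_distrib, Finset.sum_ite_eq', Finset.mem_univ, if_true,
    Finset.sum_const, Finset.card_univ, nsmul_eq_mul]
  ring

end Hebbian

lemma mul_mul_mul_mul_eq_of_sign {s t : ℝ} (hs : s = 1 ∨ s = -1) (ht : t = 1 ∨ t = -1)
    (x y z w : ℝ) : s * x * (t * y) * (s * z * (t * w)) = x * y * (z * w) := by
  calc s * x * (t * y) * (s * z * (t * w)) = (s * s) * (t * t) * (x * y * (z * w)) := by ring
    _ = x * y * (z * w) := by
      rw [mul_self_eq_one_iff.2 hs, mul_self_eq_one_iff.2 ht, one_mul, one_mul]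

lemma sum_sum_erase_const {α : Type*} [Fintype α] [DecidableEq α] (K : ℝ) :
    ∑ i : α, ∑ _j ∈ Finset.univ.erase i, K = Fintype.card α * (Fintype.card α - 1) * K := by
  rcases isEmpty_or_nonempty α with hα | hα
  · simp
  · simp only [Finset.sum_const, Finset.card_erase_of_mem (Finset.mem_univ _), Finset.card_univ,
      nsmul_eq_mul, Nat.cast_pred Fintype.card_pos]
    ring

theorem example_energy_expectation_general
    {Ω : Type*} [MeasurableSpace Ω] (P : Measure Ω) [IsProbabilityMeasure P]
    (N M : ℕ) (hN : 2 ≤ N)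
    (p : ℝ) (hp : p ∈ Set.Icc (1 / 2 : ℝ) 1)
    (ξ : Fin N → ℝ) (hξ : ∀ i, ξ i = 1 ∨ ξ i = -1)
    (χ : Fin N × Fin M → Ω → ℝ)
    (hχmeas : ∀ k, Measurable (χ k))
    (hχ1 : ∀ k, P {ω | χ k ω = 1} = ENNReal.ofReal p)
    (hχm1 : ∀ k, P {ω | χ k ω = -1} = ENNReal.ofReal (1 - p))
    (hindep : iIndepFun χ P)
    (H : (Fin N → ℝ) → Ω → ℝ)
    (hH : ∀ σ ω, H σ ω =
      -(1 / N) * ∑ i : Fin N, ∑ j ∈ Finset.univ.erase i, ∑ a : Fin M,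
        (ξ i * χ (i, a) ω) * (ξ j * χ (j, a) ω) * (σ i * σ j))
    (c : Fin M) :
    ∫ ω, H (fun i => ξ i * χ (i, c) ω) ω ∂P
      = -(N - 1) * (1 + (M - 1) * (2 * p - 1) ^ 4) := by
  have hp01 : p ∈ Set.Icc (0 : ℝ) 1 := ⟨by linarith [hp.1], hp.2⟩
  have hsign k := ae_eq_one_or_eq_neg_one_of_measure_eq_s6 (hχmeas k) hp01 (hχ1 k) (hχm1 k)
  have hmean k := integral_eq_two_mul_sub_one (hχmeas k) hp01.1 (hsign k) (hχ1 k)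
  have hL k := memLp_top_of_ae_eq_one_or_eq_neg_one (hχmeas k) (hsign k)
  have hH_example ω : H (fun i => ξ i * χ (i, c) ω) ω = -(1 / N) * ∑ i, ∑ j ∈ Finset.univ.erase i,
      ∑ a, χ (i, a) ω * χ (j, a) ω * (χ (i, c) ω * χ (j, c) ω) := by
    have hξξ i j := mul_mul_mul_mul_eq_of_sign (hξ i) (hξ j)
    simp only [hH, hξξ]
  have hint i j : Integrable
      (fun ω => ∑ a, χ (i, a) ω * χ (j, a) ω * (χ (i, c) ω * χ (j, c) ω)) P :=
    integrable_finsetSum _ fun a _ =>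
      integrable_mul_mul_mul_of_memLp_top (hL _) (hL _) (hL _) (hL _)
  have hpair : ∀ i, ∀ j ∈ Finset.univ.erase i,
      ∫ ω, ∑ a, χ (i, a) ω * χ (j, a) ω * (χ (i, c) ω * χ (j, c) ω) ∂P
        = 1 + (M - 1) * (2 * p - 1) ^ 4 := fun i j hj => by
    rw [integral_sum_mul_mul_mul_of_ne hindep hχmeas hsign hmean (Finset.ne_of_mem_erase hj).symm,
      Fintype.card_fin]
  have hN0 : (N : ℝ) ≠ 0 := Nat.cast_ne_zero.2 (by omega)
  simp only [hH_example]
  rw [integral_const_mul,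
    integral_finsetSum _ fun i _ => integrable_finsetSum _ fun j _ => hint i j]
  simp only [integral_finsetSum _ fun j _ => hint _ j]
  rw [Finset.sum_congr rfl fun i _ => Finset.sum_congr rfl (hpair i), sum_sum_erase_const,
    Fintype.card_fin]
  field_simp

/-- For any example label `c`, the expected energy of the example
configuration `η^c` under the Hebbian Hamiltonian equals
`E[H(η^c)] = -(N-1)*(1 + (M-1)*(2p-1)^4)`. -/
theorem example_energy_expectation
    {Ω : Type*} [MeasurableSpace Ω] (P : Measure Ω) [IsProbabilityMeasure P]
    (N M : ℕ) (hN : 2 ≤ N) (hM : 1 ≤ M)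
    (p : ℝ) (hp : p ∈ Set.Icc (1 / 2 : ℝ) 1)
    (ξ : Fin N → ℝ) (hξ : ∀ i, ξ i = 1 ∨ ξ i = -1)
    (χ : Fin N × Fin M → Ω → ℝ)
    (hχmeas : ∀ k, Measurable (χ k))
    (hχ1 : ∀ k, P {ω | χ k ω = 1} = ENNReal.ofReal p)
    (hχm1 : ∀ k, P {ω | χ k ω = -1} = ENNReal.ofReal (1 - p))
    (hindep : iIndepFun χ P)
    (H : (Fin N → ℝ) → Ω → ℝ)
    (hH : ∀ σ ω, H σ ω =
      -(1 / N) * ∑ i : Fin N, ∑ j ∈ Finset.univ.erase i, ∑ a : Fin M,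
        (ξ i * χ (i, a) ω) * (ξ j * χ (j, a) ω) * (σ i * σ j))
    (c : Fin M) :
    ∫ ω, H (fun i => ξ i * χ (i, c) ω) ω ∂P
      = -(N - 1) * (1 + (M - 1) * (2 * p - 1) ^ 4) :=
  example_energy_expectation_general P N M hN p hp ξ hξ χ hχmeas hχ1 hχm1 hindep H hH c
end

section
/- Critical point of the zero-temperature self-consistency equation m = erf(m/√(2ρ)): for every ρ ≥ 2/π, the only real solution of m = erf(m/√(2ρ)) is m = 0; whereas for every ρ with 0 < ρ < 2/π, there exists exactly one m > 0 satisfying m = erf(m/√(2ρ)) (and, by oddness of erf, −m is also a solution). Hence the critical load is ρ_c = 2/π. -/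
/-!
With `c = √(2ρ)` and `m = c x`, the equation `m = erf (m / c)` becomes `erf x = c x`: the graph
of `erf` meets a line through the origin. On `[0, ∞)`, `erf` is strictly concave with `erf 0 = 0`,
slope `2/√π` at `0` and values at most `1`, so `erf x / x` decreases strictly from `2/√π` towards
`0`. Hence a positive intersection exists iff `c < 2/√π`, i.e. `ρ < 2/π`, and it is unique;
negative solutions are the mirror images of positive ones since `erf` is odd.
-/

open MeasureTheory

/-- The error function `erf x = (2/√π) ∫₀ˣ exp(-t²) dt`. -/
noncomputable def erf (x : ℝ) : ℝ :=
  (2 / Real.sqrt Real.pi) * ∫ t in (0 : ℝ)..x, Real.exp (-t ^ 2)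

open Real Set

namespace StrictConcaveOn

variable {f : ℝ → ℝ} {c d x y : ℝ}

lemma lt_mul_of_hasDerivAt_zero (hf : StrictConcaveOn ℝ (Ici 0) f) (h0 : f 0 = 0)
    (hd : HasDerivAt f d 0) (hx : 0 < x) : f x < d * x := by
  have h := hf.slope_lt_of_hasDerivAt self_mem_Ici hx.le hx hd
  rwa [slope_def_field, h0, sub_zero, sub_zero, div_lt_iff₀ hx] at h

lemma eq_of_eq_mul (hf : StrictConcaveOn ℝ (Ici 0) f) (h0 : f 0 = 0) (hx : 0 < x) (hy : 0 < y)
    (hfx : f x = c * x) (hfy : f y = c * y) : x = y := by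
  by_contra hne
  wlog hxy : x < y generalizing x y
  · exact this hy hx hfy hfx (Ne.symm hne) (lt_of_le_of_ne (not_lt.1 hxy) (Ne.symm hne))
  have h := hf.secant_strict_mono self_mem_Ici hx.le hy.le hx.ne' hy.ne' hxy
  simp [h0, hfx, hfy, hx.ne', hy.ne'] at h

end StrictConcaveOn

lemma exists_pos_eq_mul_of_lt_of_hasDerivAt_zero {f : ℝ → ℝ} {c d M : ℝ} (hf : Continuous f)
    (h0 : f 0 = 0) (hd : HasDerivAt f d 0) (hcd : c < d) (hM : 0 < M) (hfM : f M ≤ c * M) :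
    ∃ x, 0 < x ∧ f x = c * x := by
  obtain ⟨a, hca, ha⟩ := (((hasDerivAt_iff_tendsto_slope_left_right.1 hd).2.eventually
    (lt_mem_nhds hcd)).and (Ioo_mem_nhdsGT hM)).exists
  rw [slope_def_field, h0, sub_zero, sub_zero, lt_div_iff₀ ha.1] at hca
  obtain ⟨x, hx, hfx⟩ := intermediate_value_Icc' ha.2.le
    (hf.sub (continuous_const_mul c)).continuousOn (show (0 : ℝ) ∈ Icc _ _ from
      ⟨by simpa using hfM, by simpa using hca.le⟩)
  exact ⟨x, ha.1.trans_le hx.1, sub_eq_zero.1 hfx⟩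

lemma continuous_exp_neg_sq : Continuous fun t : ℝ ↦ exp (-t ^ 2) := by fun_prop

lemma erf_zero : erf 0 = 0 := by simp [erf]

lemma erf_neg (x : ℝ) : erf (-x) = -erf x := by
  simp only [erf, ← mul_neg]
  congr 1
  have h := intervalIntegral.integral_comp_neg (a := 0) (b := x) fun t ↦ exp (-t ^ 2)
  simp only [neg_sq, neg_zero] at h
  rw [intervalIntegral.integral_symm, h]

lemma hasDerivAt_erf (x : ℝ) : HasDerivAt erf (2 / √π * exp (-x ^ 2)) x :=
  (intervalIntegral.integral_hasDerivAt_right (continuous_exp_neg_sq.intervalIntegrable 0 x)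
    continuous_exp_neg_sq.aestronglyMeasurable.stronglyMeasurableAtFilter
    continuous_exp_neg_sq.continuousAt).const_mul _

lemma hasDerivAt_erf_zero : HasDerivAt erf (2 / √π) 0 := by
  simpa using hasDerivAt_erf 0

lemma continuous_erf : Continuous erf :=
  continuous_iff_continuousAt.2 fun x ↦ (hasDerivAt_erf x).continuousAt

lemma erf_le_one {x : ℝ} (hx : 0 ≤ x) : erf x ≤ 1 := by
  have hint : ∫ t in (0 : ℝ)..x, exp (-t ^ 2) ≤ √π / 2 := by
    rw [intervalIntegral.integral_of_le hx]
    calc ∫ t in Ioc 0 x, exp (-t ^ 2) ≤ ∫ t in Ioi 0, exp (-t ^ 2) :=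
          setIntegral_mono_set (by simpa using (integrable_exp_neg_mul_sq one_pos).integrableOn)
            (.of_forall fun _ ↦ (exp_pos _).le) Ioc_subset_Ioi_self.eventuallyLE
      _ = √π / 2 := by simpa using integral_gaussian_Ioi 1
  calc erf x ≤ 2 / √π * (√π / 2) := by unfold erf; gcongr
    _ = 1 := by field_simp

lemma strictConcaveOn_erf : StrictConcaveOn ℝ (Ici 0) erf := by
  refine StrictAntiOn.strictConcaveOn_of_deriv (convex_Ici 0) continuous_erf.continuousOn ?_
  rw [interior_Ici, funext fun x ↦ (hasDerivAt_erf x).deriv]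
  intro x hx y _ hxy
  dsimp only
  gcongr
  exact le_of_lt hx

lemma eq_zero_of_erf_eq_mul {c x : ℝ} (hc : 2 / √π ≤ c) (h : erf x = c * x) : x = 0 := by
  have below : ∀ y, 0 < y → erf y < c * y := fun y hy ↦
    (strictConcaveOn_erf.lt_mul_of_hasDerivAt_zero erf_zero hasDerivAt_erf_zero hy).trans_le
      (by gcongr)
  rcases lt_trichotomy x 0 with hx | hx | hx
  · have h' := below (-x) (neg_pos.2 hx)
    rw [erf_neg, h] at h'
    linarith
  · exact hx
  · exact absurd h (below x hx).ne

lemma existsUnique_pos_erf_eq_mul {c : ℝ} (hc0 : 0 < c) (hc : c < 2 / √π) :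
    ∃! x, 0 < x ∧ erf x = c * x := by
  obtain ⟨x, hx, hfx⟩ := exists_pos_eq_mul_of_lt_of_hasDerivAt_zero continuous_erf erf_zero
    hasDerivAt_erf_zero hc (inv_pos.2 hc0)
    ((erf_le_one (inv_pos.2 hc0).le).trans_eq (mul_inv_cancel₀ hc0.ne').symm)
  exact ⟨x, ⟨hx, hfx⟩, fun y ⟨hy, hfy⟩ ↦
    strictConcaveOn_erf.eq_of_eq_mul erf_zero hy hx hfy hfx⟩

lemma two_div_sqrt_pi_le_sqrt_iff {ρ : ℝ} : 2 / √π ≤ √(2 * ρ) ↔ 2 / π ≤ ρ := by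
  rw [le_sqrt' (by positivity), div_pow, sq_sqrt pi_pos.le,
    show (2 : ℝ) ^ 2 / π = 2 * (2 / π) by ring]
  constructor <;> intro h <;> linarith

lemma eq_erf_div_iff {c m : ℝ} (hc : c ≠ 0) : m = erf (m / c) ↔ erf (m / c) = c * (m / c) := by
  rw [mul_div_cancel₀ m hc, eq_comm]

/-- Critical point of the zero-temperature self-consistency equation
`m = erf(m/√(2ρ))`: for every `ρ ≥ 2/π` the only real solution is `m = 0`, whereas for
every `0 < ρ < 2/π` there exists exactly one `m > 0` solving the equation (and, by
oddness of `erf`, `-m` is then also a solution).  Hence the critical load is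
`ρ_c = 2/π`. -/
theorem critical_point_self_consistency :
    (∀ ρ : ℝ, 2 / Real.pi ≤ ρ →
      ∀ m : ℝ, m = erf (m / Real.sqrt (2 * ρ)) → m = 0)
    ∧ (∀ ρ : ℝ, 0 < ρ → ρ < 2 / Real.pi →
        (∃! m : ℝ, 0 < m ∧ m = erf (m / Real.sqrt (2 * ρ)))
        ∧ (∀ m : ℝ, m = erf (m / Real.sqrt (2 * ρ)) →
            -m = erf (-m / Real.sqrt (2 * ρ)))) := by
  refine ⟨fun ρ hρ m hm ↦ ?_, fun ρ hρ0 hρ ↦ ⟨?_, fun m hm ↦ ?_⟩⟩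
  · have hc : 0 < √(2 * ρ) := sqrt_pos.2 (by linarith [(div_pos two_pos pi_pos).trans_le hρ])
    have hx := eq_zero_of_erf_eq_mul (two_div_sqrt_pi_le_sqrt_iff.2 hρ)
      ((eq_erf_div_iff hc.ne').1 hm)
    rwa [div_eq_zero_iff, or_iff_left hc.ne'] at hx
  · have hc : 0 < √(2 * ρ) := sqrt_pos.2 (by linarith)
    refine ((Equiv.divRight₀ _ hc.ne').existsUnique_congr fun m ↦ ?_).2
      (existsUnique_pos_erf_eq_mul hc (not_le.1 (two_div_sqrt_pi_le_sqrt_iff.not.2 hρ.not_ge)))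
    rw [Equiv.divRight₀_apply, div_pos_iff_of_pos_right hc, eq_erf_div_iff hc.ne']
  · rw [neg_div, erf_neg, ← hm]
end
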